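/- arXiv:1702.06049 — 2 statements merged into one kernel-verified Lean document; each statement's English description precedes it below -/
import Mathlib

section
/- Let (S,Σ,m) be a σ-finite measure space, let X be a closed linear subspace of L¹(m), and let (T_n) be a sequence of bounded linear operators from L¹(m) to itself such that lim_n ‖T_n f − f‖₁ = 0 for every f ∈ L¹(m). Assume: (1) T_n(X) ⊆ X for every n, and the image T_n(B_X) of the closed unit ball of X is relatively weakly compact in L¹(m); (2) for every n, whenever a norm-bounded sequence (f_k) in L¹(m) converges locally in measure to g ∈ L¹(m), the sequence (T_n f_k) converges locally in measure to T_n g. Then X is nicely placed: if a sequence (f_k) in the closed unit ball B_X of X converges locally in measure to some g ∈ L¹(m), then g ∈ B_X. -/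
/-!
Fix `n`. Local convergence in measure on a σ-finite space yields an almost everywhere convergent
subsequence (Borel–Cantelli along an exhaustion by sets of finite measure), so `Tₙ fₖ → Tₙ g`
a.e. along a subsequence. These `Tₙ fₖ` lie in a relatively weakly compact set, hence have a weak
cluster point `h`. By Mazur, `h` is a norm limit of convex combinations of every tail; such
combinations still converge a.e. to `Tₙ g`, so `h = Tₙ g`, and `Tₙ g ∈ X` because `X` is closed
and convex. Letting `n → ∞` gives `g ∈ X`, and `‖g‖₁ ≤ 1` is Fatou's lemma.
-/

open MeasureTheory Filter Topology

noncomputable section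

/-- A sequence of functions converges locally in measure if it converges in measure on every
measurable set of finite measure. -/
def TendstoLocallyInMeasure {α E : Type*} [MeasurableSpace α] (μ : Measure α)
    [Dist E] (f : ℕ → α → E) (g : α → E) : Prop :=
  ∀ A : Set α, MeasurableSet A → μ A < ⊤ →
    ∀ ε : ℝ, 0 < ε → Tendsto (fun i => (μ.restrict A) {x | ε ≤ dist (f i x) (g x)}) atTop (𝓝 0)

open Set
open scoped ENNReal

theorem TendstoLocallyInMeasure.exists_seq_tendsto_ae {α E : Type*} [MeasurableSpace α]
    {μ : Measure α} [SigmaFinite μ] [PseudoMetricSpace E] {f : ℕ → α → E} {g : α → E}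
    (h : TendstoLocallyInMeasure μ f g) :
    ∃ s : ℕ → ℕ, StrictMono s ∧ ∀ᵐ x ∂μ, Tendsto (fun k => f (s k) x) atTop (𝓝 (g x)) := by
  have hsmall : ∀ k : ℕ, ∀ᶠ i in atTop,
      μ ({x | 1 / ((k : ℝ) + 1) ≤ dist (f i x) (g x)} ∩ spanningSets μ k) < 2⁻¹ ^ k := by
    intro k
    simp_rw [← Measure.restrict_apply' (measurableSet_spanningSets μ k)]
    exact (h _ (measurableSet_spanningSets μ k) (measure_spanningSets_lt_top μ k) _
      (by positivity)).eventually (gt_mem_nhds (ENNReal.pow_pos (by simp) k))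
  obtain ⟨s, hs, hsmall⟩ := extraction_forall_of_eventually hsmall
  have hsum :
      ∑' k : ℕ, μ ({x | 1 / ((k : ℝ) + 1) ≤ dist (f (s k) x) (g x)} ∩ spanningSets μ k) ≠ ∞ :=
    ne_top_of_le_ne_top (tsum_geometric_lt_top.2 (by norm_num)).ne
      (ENNReal.tsum_le_tsum fun k => (hsmall k).le)
  refine ⟨s, hs, ?_⟩
  filter_upwards [ae_eventually_notMem hsum] with x hx
  obtain ⟨j, hj⟩ : ∃ j, x ∈ spanningSets μ j := mem_iUnion.1 (by rw [iUnion_spanningSets]; trivial)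
  have hclose : ∀ᶠ k in atTop, dist (f (s k) x) (g x) ≤ 1 / ((k : ℝ) + 1) := by
    filter_upwards [hx, eventually_ge_atTop j] with k hk hjk
    by_contra hfar
    exact hk ⟨(not_le.1 hfar).le, monotone_spanningSets μ hjk hj⟩
  exact tendsto_iff_dist_tendsto_zero.2 <| squeeze_zero' (Eventually.of_forall fun _ => dist_nonneg)
    hclose tendsto_one_div_add_atTop_nhds_zero_nat

section Lp

variable {α E : Type*} [MeasurableSpace α] {μ : Measure α} [NormedAddCommGroup E] {p : ℝ≥0∞}

theorem MeasureTheory.Lp.norm_le_of_ae_tendsto {f : ℕ → Lp E p μ} {g : Lp E p μ} {C : ℝ}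
    (hf : ∀ k, ‖f k‖ ≤ C) (hfg : ∀ᵐ x ∂μ, Tendsto (fun k => f k x) atTop (𝓝 (g x))) :
    ‖g‖ ≤ C := by
  simp only [Lp.norm_def] at hf ⊢
  refine ENNReal.toReal_le_of_le_ofReal (ENNReal.toReal_nonneg.trans (hf 0)) <|
    Lp.eLpNorm_le_of_ae_tendsto (Eventually.of_forall fun k => ?_)
      (fun k => Lp.aestronglyMeasurable _) hfg
  rw [← ENNReal.ofReal_toReal (Lp.eLpNorm_ne_top (f k))]
  exact ENNReal.ofReal_le_ofReal (hf k)

variable [NormedSpace ℝ E]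

theorem MeasureTheory.Lp.ae_mem_convexHull_image_eval {s : Set (Lp E p μ)} {c : Lp E p μ}
    (hc : c ∈ convexHull ℝ s) : ∀ᵐ x ∂μ, c x ∈ convexHull ℝ ((fun w : Lp E p μ => w x) '' s) := by
  refine convexHull_min (t := {c | ∀ᵐ x ∂μ, c x ∈ convexHull ℝ ((fun w : Lp E p μ => w x) '' s)})
    (fun w hw => ?_) (fun c₁ hc₁ c₂ hc₂ a b ha hb hab => ?_) hc
  · exact ae_of_all μ fun x => subset_convexHull ℝ _ (mem_image_of_mem (· x) hw)
  filter_upwards [hc₁, hc₂, Lp.coeFn_add (a • c₁) (b • c₂), Lp.coeFn_smul a c₁,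
    Lp.coeFn_smul b c₂] with x hx₁ hx₂ hadd hsmul₁ hsmul₂
  rw [hadd, Pi.add_apply, hsmul₁, hsmul₂]
  exact convex_convexHull ℝ _ hx₁ hx₂ ha hb hab

theorem ae_tendsto_of_mem_convexHull_image_Ici {u c : ℕ → Lp E p μ} {v : α → E}
    (hu : ∀ᵐ x ∂μ, Tendsto (fun k => u k x) atTop (𝓝 (v x)))
    (hc : ∀ N, c N ∈ convexHull ℝ (u '' Ici N)) :
    ∀ᵐ x ∂μ, Tendsto (fun N => c N x) atTop (𝓝 (v x)) := by
  filter_upwards [hu, ae_all_iff.2 fun N => Lp.ae_mem_convexHull_image_eval (hc N)]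
    with x hux hcx
  rw [Metric.tendsto_atTop] at hux ⊢
  intro ε hε
  obtain ⟨M, hM⟩ := hux ε hε
  refine ⟨M, fun N hN => convexHull_min ?_ (convex_ball (v x) ε) (hcx N)⟩
  rintro _ ⟨_, ⟨k, hk, rfl⟩, rfl⟩
  exact hM k (hN.trans hk)

theorem ae_eq_of_forall_mem_closure_convexHull_image_Ici [Fact (1 ≤ p)] {u : ℕ → Lp E p μ}
    {v : α → E} {h : Lp E p μ} (hu : ∀ᵐ x ∂μ, Tendsto (fun k => u k x) atTop (𝓝 (v x)))
    (hh : ∀ N, h ∈ closure (convexHull ℝ (u '' Ici N))) : h =ᵐ[μ] v := by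
  choose c hc hdist using fun N : ℕ =>
    Metric.mem_closure_iff.1 (hh N) (1 / ((N : ℝ) + 1)) Nat.one_div_pos_of_nat
  have hch : Tendsto c atTop (𝓝 h) :=
    tendsto_iff_dist_tendsto_zero.2 <| squeeze_zero (fun _ => dist_nonneg)
      (fun N => (dist_comm _ _).trans_le (hdist N).le) tendsto_one_div_add_atTop_nhds_zero_nat
  obtain ⟨s, hs, hcs⟩ := (tendstoInMeasure_of_tendsto_Lp hch).exists_seq_tendsto_ae
  filter_upwards [ae_tendsto_of_mem_convexHull_image_Ici hu hc, hcs] with x hcv hch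
  exact tendsto_nhds_unique hch (hcv.comp hs.tendsto_atTop)

end Lp

theorem mem_closure_convexHull_image_Ici_of_mapClusterPt {E : Type*} [NormedAddCommGroup E]
    [NormedSpace ℝ E] {u : ℕ → E} {h : E}
    (hh : MapClusterPt (toWeakSpace ℝ E h) atTop (toWeakSpace ℝ E ∘ u)) (N : ℕ) :
    h ∈ closure (convexHull ℝ (u '' Ici N)) := by
  have hweak := mapClusterPt_atTop_iff_forall_mem_closure.1 hh N
  rw [image_comp] at hweak
  have := closure_mono (image_mono (subset_convexHull ℝ (u '' Ici N))) hweak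
  rwa [← (convex_convexHull ℝ _).toWeakSpace_closure ℝ,
    (toWeakSpace ℝ E).injective.mem_set_image] at this

theorem Convex.mem_of_ae_tendsto_of_isCompact_closure_toWeakSpace {α E : Type*}
    [MeasurableSpace α] {μ : Measure α} [NormedAddCommGroup E] [NormedSpace ℝ E] {p : ℝ≥0∞}
    [Fact (1 ≤ p)] {Y K : Set (Lp E p μ)} (hY : Convex ℝ Y) (hYc : IsClosed Y)
    (hK : IsCompact (closure (toWeakSpace ℝ (Lp E p μ) '' K))) {u : ℕ → Lp E p μ}
    (huY : ∀ k, u k ∈ Y) (huK : ∀ k, u k ∈ K) {v : Lp E p μ}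
    (huv : ∀ᵐ x ∂μ, Tendsto (fun k => u k x) atTop (𝓝 (v x))) : v ∈ Y := by
  obtain ⟨h, -, hh⟩ := hK.exists_mapClusterPt_of_frequently (l := atTop)
    (f := toWeakSpace ℝ _ ∘ u)
    (Frequently.of_forall fun k => subset_closure (mem_image_of_mem _ (huK k)))
  obtain ⟨h, rfl⟩ := (toWeakSpace ℝ (Lp E p μ)).surjective h
  have hhull := mem_closure_convexHull_image_Ici_of_mapClusterPt hh
  obtain rfl : h = v := Lp.ext (ae_eq_of_forall_mem_closure_convexHull_image_Ici huv hhull)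
  exact closure_minimal (convexHull_min (by rintro _ ⟨k, -, rfl⟩; exact huY k) hY) hYc (hhull 0)

/-- Let `X` be a closed subspace of `L¹(m)` and `(Tₙ)` an approximating
sequence of operators such that `Tₙ(X) ⊆ X` with `Tₙ(B_X)` relatively weakly compact, and each
`Tₙ` is continuous for local convergence in measure on norm-bounded sequences.  Then `X` is
nicely placed: its closed unit ball is closed under local convergence in measure. -/
theorem nicely_placed_of_approximating_operators
    {α : Type*} [MeasurableSpace α] (μ : Measure α) [SigmaFinite μ]
    (X : Submodule ℝ (Lp ℝ 1 μ)) (hXc : IsClosed (X : Set (Lp ℝ 1 μ)))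
    (T : ℕ → Lp ℝ 1 μ →L[ℝ] Lp ℝ 1 μ)
    (hTapprox : ∀ f : Lp ℝ 1 μ, Tendsto (fun n => ‖T n f - f‖) atTop (𝓝 0))
    (hTX : ∀ n, ∀ f ∈ X, T n f ∈ X)
    (hTweak : ∀ n, IsCompact (closure
      (⇑(toWeakSpace ℝ (Lp ℝ 1 μ)) '' (⇑(T n) '' {f : Lp ℝ 1 μ | f ∈ X ∧ ‖f‖ ≤ 1}))))
    (hTmeas : ∀ n (f : ℕ → Lp ℝ 1 μ) (g : Lp ℝ 1 μ), (∃ C : ℝ, ∀ k, ‖f k‖ ≤ C) →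
      TendstoLocallyInMeasure μ (fun k => ⇑(f k)) ⇑g →
      TendstoLocallyInMeasure μ (fun k => ⇑(T n (f k))) ⇑(T n g))
    (f : ℕ → Lp ℝ 1 μ) (g : Lp ℝ 1 μ)
    (hfX : ∀ k, f k ∈ X) (hfb : ∀ k, ‖f k‖ ≤ 1)
    (hconv : TendstoLocallyInMeasure μ (fun k => ⇑(f k)) ⇑g) :
    g ∈ X ∧ ‖g‖ ≤ 1 := by
  have hTg : ∀ n, T n g ∈ X := fun n => by
    obtain ⟨s, -, hs⟩ := (hTmeas n f g ⟨1, hfb⟩ hconv).exists_seq_tendsto_ae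
    exact X.convex.mem_of_ae_tendsto_of_isCompact_closure_toWeakSpace hXc (hTweak n)
      (fun k => hTX n _ (hfX (s k))) (fun k => mem_image_of_mem _ ⟨hfX (s k), hfb (s k)⟩) hs
  obtain ⟨s, -, hs⟩ := hconv.exists_seq_tendsto_ae
  exact ⟨hXc.mem_of_tendsto (tendsto_iff_norm_sub_tendsto_zero.2 (hTapprox g))
    (Eventually.of_forall hTg), Lp.norm_le_of_ae_tendsto (fun k => hfb (s k)) hs⟩
end
end

section
/- Let 𝕋 be the unit circle equipped with its Haar probability measure m. Let F ∈ L^∞(𝕋) be such that the linear functional f ↦ ∫_𝕋 f F dm is sequentially continuous on the closed unit ball of L¹(𝕋) for the topology of convergence in measure; that is, whenever (f_k) is a sequence with ‖f_k‖₁ ≤ 1 converging in measure to f, one has ∫ f_k F dm → ∫ f F dm. Then F = 0 almost everywhere. -/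
open MeasureTheory Filter Topology Set

/-! If `F ≠ 0`, then for some `c > 0` and sign `s` the set `A = {c ≤ s F}` has positive measure.
Balls of radius `r` in the circle have measure at most `2r`, so `A` contains sets `E k` of
positive measure tending to `0`. The normalized indicators `s 1_{E k} / m(E k)` have `L¹` norm
`1` and tend to `0` in measure, yet their integrals against `F` all stay `≥ c`. -/

theorem Metric.exists_measure_inter_ball_ne_zero {X : Type*} [PseudoMetricSpace X]
    [TopologicalSpace.SeparableSpace X] [MeasurableSpace X] (μ : Measure X) {A : Set X}
    (hA : μ A ≠ 0) {r : ℝ} (hr : 0 < r) : ∃ x, μ (A ∩ Metric.ball x r) ≠ 0 := by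
  by_contra! h
  obtain ⟨s, hs, hsd⟩ := TopologicalSpace.exists_countable_dense X
  have hcover : A = ⋃ c ∈ s, A ∩ Metric.ball c r := by
    rw [← inter_iUnion₂, (Metric.dense_iff_iUnion_ball s).1 hsd r hr, inter_univ]
  exact hA (hcover ▸ (measure_biUnion_null_iff hs).2 fun c _ => h c)

theorem AddCircle.exists_seq_subset_volume_ne_zero_tendsto_zero {T : ℝ} [Fact (0 < T)]
    {A : Set (AddCircle T)} (hA : MeasurableSet A) (hA0 : volume A ≠ 0) :
    ∃ E : ℕ → Set (AddCircle T), (∀ k, MeasurableSet (E k)) ∧ (∀ k, E k ⊆ A) ∧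
      (∀ k, volume (E k) ≠ 0) ∧ Tendsto (fun k => volume (E k)) atTop (𝓝 0) := by
  choose x hx using fun k : ℕ =>
    Metric.exists_measure_inter_ball_ne_zero volume hA0 (Nat.one_div_pos_of_nat (n := k))
  refine ⟨fun k => A ∩ Metric.ball (x k) (1 / (k + 1)), fun k => hA.inter measurableSet_ball,
    fun k => inter_subset_left, hx, ?_⟩
  have hbound : ∀ k : ℕ, volume (A ∩ Metric.ball (x k) (1 / (k + 1))) ≤
      ENNReal.ofReal (2 * (1 / ((k : ℝ) + 1))) := fun k =>
    calc _ ≤ volume (Metric.closedBall (x k) (1 / (k + 1))) :=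
          measure_mono (inter_subset_right.trans Metric.ball_subset_closedBall)
      _ = _ := AddCircle.volume_closedBall T _
      _ ≤ _ := ENNReal.ofReal_le_ofReal (min_le_right _ _)
  have hlim :
      Tendsto (fun k : ℕ => ENNReal.ofReal (2 * (1 / ((k : ℝ) + 1)))) atTop (𝓝 0) := by
    simpa using ENNReal.tendsto_ofReal (tendsto_one_div_add_atTop_nhds_zero_nat.const_mul 2)
  exact tendsto_of_tendsto_of_tendsto_of_le_of_le tendsto_const_nhds hlim (fun _ => zero_le)
    hbound

section MeasureSpace

variable {α : Type*} [MeasurableSpace α] {μ : Measure α}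

theorem exists_measure_le_mul_ne_zero_of_not_ae_eq_zero {F : α → ℝ} (hF : ¬ F =ᵐ[μ] 0) :
    ∃ c > 0, ∃ s : ℝ, |s| = 1 ∧ μ {x | c ≤ s * F x} ≠ 0 := by
  by_contra! h
  refine hF (measure_mono_null (fun x (hx : F x ≠ 0) => ?_) (measure_iUnion_null fun n : ℕ =>
    measure_union_null (h (1 / (n + 1)) n.one_div_pos_of_nat 1 abs_one)
      (h (1 / (n + 1)) n.one_div_pos_of_nat (-1) (by simp))))
  obtain ⟨n, hn⟩ := exists_nat_one_div_lt (abs_pos.2 hx)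
  refine mem_iUnion.2 ⟨n, ?_⟩
  rcases le_abs'.1 hn.le with h | h
  · right; simp only [mem_ofPred_eq]; linarith
  · left; simp only [mem_ofPred_eq]; linarith

theorem tendstoInMeasure_indicator_zero {G : Type*} [PseudoEMetricSpace G] [Zero G]
    {E : ℕ → Set α} (hE : Tendsto (fun k => μ (E k)) atTop (𝓝 0)) (h : ℕ → α → G) :
    TendstoInMeasure μ (fun k => (E k).indicator (h k)) atTop 0 := by
  intro ε hε
  refine tendsto_of_tendsto_of_tendsto_of_le_of_le tendsto_const_nhds hE (fun _ => zero_le)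
    fun k => measure_mono fun x hx => ?_
  by_contra hxE
  simp [indicator_of_notMem hxE, hε.ne'] at hx

theorem norm_indicatorConstLp_one {G : Type*} [NormedAddCommGroup G] {s : Set α}
    (hs : MeasurableSet s) (hμs : μ s ≠ ⊤) (c : G) :
    ‖indicatorConstLp 1 hs hμs c‖ = ‖c‖ * μ.real s := by
  simp [norm_indicatorConstLp one_ne_zero ENNReal.one_ne_top]

theorem integral_indicatorConstLp_mul {p : ENNReal} {s : Set α} (hs : MeasurableSet s)
    (hμs : μ s ≠ ⊤) (c : ℝ) (F : α → ℝ) :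
    ∫ x, indicatorConstLp p hs hμs c x * F x ∂μ = c * ∫ x in s, F x ∂μ := by
  have h : (fun x => indicatorConstLp p hs hμs c x * F x) =ᵐ[μ] s.indicator (c * F ·) := by
    filter_upwards [indicatorConstLp_coeFn (p := p) (hs := hs) (hμs := hμs) (c := c)] with x hx
    simp only [hx, indicator_mul_left]
  rw [integral_congr_ae h, integral_indicator hs, integral_const_mul]

end MeasureSpace

/-- On the circle `𝕋` with Haar probability measure, no nonzero
`F ∈ L^∞(𝕋)` induces a functional `f ↦ ∫ f F` on `L¹(𝕋)` that is sequentially continuous on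
the closed unit ball of `L¹(𝕋)` for the topology of convergence in measure: if the
functional is continuous in this sense, then `F = 0`. -/
theorem no_inMeasure_continuous_functional_on_L1_circle
    (F : Lp ℝ ⊤ (volume : Measure UnitAddCircle))
    (hF : ∀ (f : ℕ → Lp ℝ 1 (volume : Measure UnitAddCircle))
        (g : Lp ℝ 1 (volume : Measure UnitAddCircle)),
      (∀ k, ‖f k‖ ≤ 1) → ‖g‖ ≤ 1 →
      TendstoInMeasure (volume : Measure UnitAddCircle) (fun k => ⇑(f k)) atTop ⇑g →
      Tendsto (fun k => ∫ x, f k x * F x) atTop (𝓝 (∫ x, g x * F x))) :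
    F = 0 := by
  by_contra hne
  obtain ⟨c, hc, s, hs, hA⟩ := exists_measure_le_mul_ne_zero_of_not_ae_eq_zero
    fun h => hne (Lp.eq_zero_iff_ae_eq_zero.2 h)
  have hAm : MeasurableSet {x | c ≤ s * F x} :=
    measurableSet_le measurable_const ((Lp.stronglyMeasurable F).measurable.const_mul s)
  obtain ⟨E, hEm, hEA, hE0, hElim⟩ :=
    AddCircle.exists_seq_subset_volume_ne_zero_tendsto_zero hAm hA
  set f : ℕ → Lp ℝ 1 (volume : Measure UnitAddCircle) := fun k =>
    indicatorConstLp 1 (hEm k) (measure_ne_top _ _) (s / volume.real (E k))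
  have hpos : ∀ k, 0 < volume.real (E k) := fun k =>
    ENNReal.toReal_pos (hE0 k) (measure_ne_top _ _)
  have hnorm : ∀ k, ‖f k‖ ≤ 1 := fun k => by
    rw [norm_indicatorConstLp_one, norm_div, Real.norm_eq_abs, hs,
      Real.norm_of_nonneg (hpos k).le, one_div_mul_cancel (hpos k).ne']
  have hlow : ∀ k, c ≤ ∫ x, f k x * F x := fun k => by
    rw [integral_indicatorConstLp_mul, div_mul_eq_mul_div, ← integral_const_mul,
      le_div_iff₀ (hpos k)]
    exact setIntegral_ge_of_const_le_real (hEm k) (measure_ne_top _ _) (hEA k)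
      (((Lp.memLp F).integrable le_top).const_mul s).integrableOn
  have hconv : TendstoInMeasure volume (fun k => ⇑(f k)) atTop 0 :=
    (tendstoInMeasure_indicator_zero hElim _).congr_left fun k => indicatorConstLp_coeFn.symm
  have hlim := hF f 0 hnorm (by simp) (hconv.congr_right (Lp.coeFn_zero ℝ 1 volume).symm)
  simp only [ZeroMemClass.coe_zero, AEEqFun.coeFn_zero_eq, zero_mul, integral_zero] at hlim
  exact hc.not_ge (ge_of_tendsto' hlim hlow)
end
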